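/- If lim_{k→∞} k/r_k exists and lies in (0, ∞), then overfitting is tempered: liminf_{n→∞} E_0(n) > 1 and limsup_{n→∞} E_0(n) < ∞. -/

import Mathlib

/-!
Write `xᵢ = λᵢ / (λᵢ + κ)`, let `k` be the number of eigenvalues `λᵢ ≥ κ`, `T = ∑_{i ≥ k} λᵢ` and
`u = T / κ`. The first `k` modes have `xᵢ ≥ 1/2`, so `∑ xᵢ² ≥ k/4`; the remaining ones have
`λᵢ/(2κ) ≤ xᵢ ≤ λᵢ/κ` and `xᵢ ≤ 1/2`, so they contribute at most `u` to `n = ∑ xᵢ` and at least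
`u/4` to `n - ∑ xᵢ²`. Hence `E` is pinched between two continuous functions of `v = k/u` that are
`> 1` and finite at `v = c`. Since `λ_k < κ ≤ λ_{k-1}`, `v` lies between `k/r_k` and
`k/(r_{k-1} - 1)`, and both tend to `c` because `n ≤ k + r_k` forces `k → ∞`.
-/

open Filter Topology

noncomputable section

def tail (lam : ℕ → ℝ) (k : ℕ) : ℝ := ∑' i, lam (i + k)

def effRank (lam : ℕ → ℝ) (k : ℕ) : ℝ := tail lam k / lam k

def learnability (lam : ℕ → ℝ) (κ : ℝ) (i : ℕ) : ℝ := lam i / (lam i + κ)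

/-- The junk value `sInf ∅ = 0` never occurs for `0 < κ`, since `lam` tends to `0`. -/
def thresholdIndex (lam : ℕ → ℝ) (κ : ℝ) : ℕ := sInf {i | lam i < κ}

def thresholdRatio (lam : ℕ → ℝ) (κ : ℝ) : ℝ :=
  thresholdIndex lam κ / (tail lam (thresholdIndex lam κ) / κ)

end

theorem tendsto_atTop_of_natCast_le_comp {f : ℕ → ℝ} {k : ℕ → ℕ}
    (h : ∀ᶠ n : ℕ in atTop, (n : ℝ) ≤ f (k n)) : Tendsto k atTop atTop := by
  refine tendsto_atTop.2 fun K => ?_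
  obtain ⟨B, hB⟩ := ((Set.finite_lt_nat K).image f).bddAbove
  filter_upwards [h, eventually_gt_atTop ⌈B⌉₊] with n hn hnB
  by_contra! hlt
  linarith [hB ⟨k n, hlt, rfl⟩, Nat.lt_of_ceil_lt hnB]

theorem tendsto_succ_div_sub_one {r : ℕ → ℝ} {c : ℝ} (hc : 0 < c)
    (h : Tendsto (fun j : ℕ => (j : ℝ) / r j) atTop (𝓝 c)) :
    Tendsto (fun j : ℕ => ((j : ℝ) + 1) / (r j - 1)) atTop (𝓝 c) := by
  have hr : Tendsto r atTop atTop := by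
    refine (tendsto_natCast_atTop_atTop.atTop_mul_pos (inv_pos.2 hc) (h.inv₀ hc.ne')).congr' ?_
    filter_upwards [h.eventually_ne hc.ne', eventually_ne_atTop 0] with j hj hj0
    have : r j ≠ 0 := by rintro h0; simp [h0] at hj
    field_simp
  have hinv : Tendsto (fun j => (r j)⁻¹) atTop (𝓝 0) := tendsto_inv_atTop_zero.comp hr
  have hlim : Tendsto (fun j : ℕ => ((j : ℝ) / r j + (r j)⁻¹) / (1 - (r j)⁻¹)) atTop
      (𝓝 ((c + 0) / (1 - 0))) :=
    (h.add hinv).div (tendsto_const_nhds.sub hinv) (by norm_num)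
  rw [add_zero, sub_zero, div_one] at hlim
  refine hlim.congr' ?_
  filter_upwards [hr.eventually_gt_atTop 1] with j hj
  have : r j - 1 ≠ 0 := by linarith
  field_simp

section Learnability

variable {l κ : ℝ}

theorem div_add_le_div_right (hl : 0 ≤ l) (hκ : 0 < κ) : l / (l + κ) ≤ l / κ :=
  div_le_div_of_nonneg_left hl hκ (by linarith)

theorem div_add_le_one (hl : 0 ≤ l) (hκ : 0 < κ) : l / (l + κ) ≤ 1 :=
  (div_le_one (by linarith)).2 (by linarith)

theorem one_half_le_div_add (hκ : 0 < κ) (hκl : κ ≤ l) : 1 / 2 ≤ l / (l + κ) := by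
  rw [div_le_div_iff₀ two_pos (by linarith)]
  linarith

theorem div_add_sub_sq_nonneg (hl : 0 ≤ l) (hκ : 0 < κ) : 0 ≤ l / (l + κ) - (l / (l + κ)) ^ 2 := by
  nlinarith [div_add_le_one hl hκ, div_nonneg hl (by linarith : 0 ≤ l + κ)]

theorem div_four_mul_le_div_add_sub_sq (hl : 0 ≤ l) (hκ : 0 < κ) (hlκ : l ≤ κ) :
    l / (4 * κ) ≤ l / (l + κ) - (l / (l + κ)) ^ 2 := by
  have hsum : 0 < l + κ := by linarith
  have : l / (l + κ) - (l / (l + κ)) ^ 2 = l * κ / (l + κ) ^ 2 := by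
    field_simp
    ring
  rw [this, div_le_div_iff₀ (by positivity) (by positivity)]
  have : (l + κ) ^ 2 ≤ 4 * κ * κ := by nlinarith
  nlinarith [mul_le_mul_of_nonneg_left this hl]

end Learnability

section Spectrum

variable {lam : ℕ → ℝ} {κ : ℝ}

theorem tail_pos (hpos : ∀ i, 0 < lam i) (hsum : Summable lam) (k : ℕ) : 0 < tail lam k :=
  ((summable_nat_add_iff k).2 hsum).tsum_pos (fun _ => (hpos _).le) 0 (hpos _)

theorem tail_eq_add_tail_succ (hsum : Summable lam) (k : ℕ) :
    tail lam k = lam k + tail lam (k + 1) := by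
  rw [tail, ((summable_nat_add_iff k).2 hsum).tsum_eq_zero_add, zero_add, tail]
  simp only [add_right_comm _ 1 k, add_assoc]

theorem effRank_sub_one (hpos : ∀ i, 0 < lam i) (hsum : Summable lam) (k : ℕ) :
    effRank lam k - 1 = tail lam (k + 1) / lam k := by
  rw [effRank, tail_eq_add_tail_succ hsum, add_div, div_self (hpos k).ne', add_sub_cancel_left]

theorem learnability_nonneg (hpos : ∀ i, 0 < lam i) (hκ : 0 < κ) (i : ℕ) :
    0 ≤ learnability lam κ i :=
  div_nonneg (hpos i).le (by linarith [hpos i])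

theorem learnability_le_one (hpos : ∀ i, 0 < lam i) (hκ : 0 < κ) (i : ℕ) :
    learnability lam κ i ≤ 1 :=
  div_add_le_one (hpos i).le hκ

theorem summable_learnability (hpos : ∀ i, 0 < lam i) (hsum : Summable lam) (hκ : 0 < κ) :
    Summable (learnability lam κ) :=
  (hsum.div_const κ).of_nonneg_of_le (learnability_nonneg hpos hκ)
    (fun i => div_add_le_div_right (hpos i).le hκ)

theorem summable_learnability_sq (hpos : ∀ i, 0 < lam i) (hsum : Summable lam) (hκ : 0 < κ) :
    Summable (fun i => learnability lam κ i ^ 2) :=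
  (summable_learnability hpos hsum hκ).of_nonneg_of_le (fun i => sq_nonneg _)
    (fun i => by nlinarith [learnability_nonneg hpos hκ i, learnability_le_one hpos hκ i])

open Finset in
theorem tsum_learnability_le (hpos : ∀ i, 0 < lam i) (hsum : Summable lam) (hκ : 0 < κ)
    (k : ℕ) : ∑' i, learnability lam κ i ≤ k + tail lam k / κ := by
  have hx := summable_learnability hpos hsum hκ
  rw [← hx.sum_add_tsum_nat_add k]
  have hhead : ∑ i ∈ range k, learnability lam κ i ≤ k := by
    simpa using sum_le_card_nsmul (range k) _ 1 fun i _ => learnability_le_one hpos hκ i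
  have htail : ∑' i, learnability lam κ (i + k) ≤ tail lam k / κ := by
    rw [tail, ← tsum_div_const]
    exact ((summable_nat_add_iff k).2 hx).tsum_le_tsum
      (fun i => div_add_le_div_right (hpos _).le hκ) (((summable_nat_add_iff k).2 hsum).div_const κ)
  linarith

open Finset in
theorem le_tsum_learnability_sq (hpos : ∀ i, 0 < lam i) (hsum : Summable lam) (hκ : 0 < κ)
    {k : ℕ} (hk : ∀ i < k, κ ≤ lam i) : (k : ℝ) / 4 ≤ ∑' i, learnability lam κ i ^ 2 :=
  calc (k : ℝ) / 4 = ∑ _i ∈ range k, (1 / 2 : ℝ) ^ 2 := by simp; ring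
    _ ≤ ∑ i ∈ range k, learnability lam κ i ^ 2 := sum_le_sum fun i hi =>
      pow_le_pow_left₀ (by norm_num) (one_half_le_div_add hκ (hk i (mem_range.1 hi))) 2
    _ ≤ ∑' i, learnability lam κ i ^ 2 :=
      (summable_learnability_sq hpos hsum hκ).sum_le_tsum _ fun i _ => sq_nonneg _

open Finset in
theorem tail_div_le_tsum_learnability_sub_sq (hpos : ∀ i, 0 < lam i) (hsum : Summable lam)
    (hκ : 0 < κ) {k : ℕ} (hk : ∀ i, k ≤ i → lam i ≤ κ) :
    tail lam k / (4 * κ) ≤ ∑' i, learnability lam κ i - ∑' i, learnability lam κ i ^ 2 := by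
  have hx := summable_learnability hpos hsum hκ
  have hsq := summable_learnability_sq hpos hsum hκ
  have hd := hx.sub hsq
  rw [← hx.tsum_sub hsq, ← hd.sum_add_tsum_nat_add k, tail, ← tsum_div_const]
  have hhead : 0 ≤ ∑ i ∈ range k, (learnability lam κ i - learnability lam κ i ^ 2) :=
    sum_nonneg fun i _ => div_add_sub_sq_nonneg (hpos i).le hκ
  have htail : ∑' i, lam (i + k) / (4 * κ) ≤
      ∑' i, (learnability lam κ (i + k) - learnability lam κ (i + k) ^ 2) :=
    (((summable_nat_add_iff k).2 hsum).div_const _).tsum_le_tsum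
      (fun i => div_four_mul_le_div_add_sub_sq (hpos _).le hκ (hk _ (by omega)))
      ((summable_nat_add_iff k).2 hd)
  linarith

theorem lam_thresholdIndex_lt (hsum : Summable lam) (hκ : 0 < κ) :
    lam (thresholdIndex lam κ) < κ :=
  Nat.sInf_mem (hsum.tendsto_atTop_zero.eventually (gt_mem_nhds hκ)).exists

theorem le_lam_of_lt_thresholdIndex {i : ℕ} (hi : i < thresholdIndex lam κ) : κ ≤ lam i :=
  not_lt.1 (Nat.notMem_of_lt_sInf hi)

theorem tsum_learnability_le_add_effRank (hpos : ∀ i, 0 < lam i) (hsum : Summable lam)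
    (hκ : 0 < κ) : ∑' i, learnability lam κ i ≤
      thresholdIndex lam κ + effRank lam (thresholdIndex lam κ) := by
  refine (tsum_learnability_le hpos hsum hκ (thresholdIndex lam κ)).trans ?_
  gcongr
  exact div_le_div_of_nonneg_left (tail_pos hpos hsum _).le (hpos _)
    (lam_thresholdIndex_lt hsum hκ).le

theorem div_effRank_le_thresholdRatio (hpos : ∀ i, 0 < lam i) (hsum : Summable lam)
    (hκ : 0 < κ) :
    thresholdIndex lam κ / effRank lam (thresholdIndex lam κ) ≤ thresholdRatio lam κ := by
  have hT := tail_pos hpos hsum (thresholdIndex lam κ)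
  refine div_le_div_of_nonneg_left (Nat.cast_nonneg _) (by positivity) ?_
  exact div_le_div_of_nonneg_left hT.le (hpos _) (lam_thresholdIndex_lt hsum hκ).le

theorem thresholdRatio_le_div_effRank_pred (hpos : ∀ i, 0 < lam i) (hsum : Summable lam)
    (hκ : 0 < κ) (hk : 1 ≤ thresholdIndex lam κ) : thresholdRatio lam κ ≤
      thresholdIndex lam κ / (effRank lam (thresholdIndex lam κ - 1) - 1) := by
  rw [effRank_sub_one hpos hsum, Nat.sub_add_cancel hk]
  have hT := tail_pos hpos hsum (thresholdIndex lam κ)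
  refine div_le_div_of_nonneg_left (Nat.cast_nonneg _) (div_pos hT (hpos _)) ?_
  exact div_le_div_of_nonneg_left hT.le hκ (le_lam_of_lt_thresholdIndex (by omega))

theorem overfitting_bounds {S Q k u : ℝ} (hk : 0 ≤ k) (hu : 0 < u) (hS : S ≤ k + u)
    (hQ : k / 4 ≤ Q) (hSQ : u / 4 ≤ S - Q) :
    4 * (k / u + 1) / (3 * (k / u) + 4) ≤ S / (S - Q) ∧ S / (S - Q) ≤ 4 * (1 + k / u) := by
  have hSQ_pos : 0 < S - Q := by linarith
  constructor
  · have : 4 * (k / u + 1) / (3 * (k / u) + 4) = 4 * (k + u) / (3 * k + 4 * u) := by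
      field_simp
    rw [this, div_le_div_iff₀ (by linarith) hSQ_pos]
    nlinarith
  · have : 4 * (1 + k / u) = (k + u) / (u / 4) := by
      field_simp
      ring
    rw [this, div_le_div_iff₀ hSQ_pos (by linarith)]
    nlinarith

theorem learnability_overfitting_bounds (hpos : ∀ i, 0 < lam i) (hanti : Antitone lam)
    (hsum : Summable lam) (hκ : 0 < κ) :
    let S := ∑' i, learnability lam κ i
    let Q := ∑' i, learnability lam κ i ^ 2
    4 * (thresholdRatio lam κ + 1) / (3 * thresholdRatio lam κ + 4) ≤ S / (S - Q) ∧
      S / (S - Q) ≤ 4 * (1 + thresholdRatio lam κ) := by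
  have hT := tail_pos hpos hsum (thresholdIndex lam κ)
  refine overfitting_bounds (Nat.cast_nonneg _) (div_pos hT hκ)
    (tsum_learnability_le hpos hsum hκ _)
    (le_tsum_learnability_sq hpos hsum hκ fun i => le_lam_of_lt_thresholdIndex) ?_
  refine le_of_eq_of_le ?_ (tail_div_le_tsum_learnability_sub_sq hpos hsum hκ fun i hi =>
    (hanti hi).trans (lam_thresholdIndex_lt hsum hκ).le)
  field_simp

end Spectrum

/-- If `lim_{k→∞} k/r_k` exists and lies in `(0, ∞)`, then
overfitting is tempered: `liminf_{n→∞} E_0(n) > 1` and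
`limsup_{n→∞} E_0(n) < ∞` (i.e. `E` is eventually bounded above). -/
theorem tempered_overfitting_of_k_div_rk_tendsto_const
    (lam : ℕ → ℝ) (hlam_pos : ∀ i, 0 < lam i) (hlam_mono : Antitone lam)
    (hlam_summable : Summable lam)
    (κ : ℕ → ℝ) (hκ_pos : ∀ n, 1 ≤ n → 0 < κ n)
    (hκ_eq : ∀ n : ℕ, 1 ≤ n → ∑' i, lam i / (lam i + κ n) = (n : ℝ))
    (E : ℕ → ℝ)
    (hE : ∀ n : ℕ, E n = (n : ℝ) / ((n : ℝ) - ∑' i, (lam i / (lam i + κ n)) ^ 2))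
    (r : ℕ → ℝ) (hr : ∀ j, r j = (∑' i, lam (j + i)) / lam j)
    (c : ℝ) (hc : 0 < c)
    (h : Filter.Tendsto (fun k : ℕ => (k : ℝ) / r k) Filter.atTop (nhds c)) :
    1 < Filter.liminf E Filter.atTop ∧
      Filter.IsBoundedUnder (· ≤ ·) Filter.atTop E := by
  obtain rfl : r = effRank lam := funext fun j => by
    rw [hr, effRank, tail]
    simp only [add_comm j]
  set k : ℕ → ℕ := fun n => thresholdIndex lam (κ n)
  set v : ℕ → ℝ := fun n => thresholdRatio lam (κ n)
  have hk : Tendsto k atTop atTop :=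
    tendsto_atTop_of_natCast_le_comp (f := fun j => j + effRank lam j) <| by
      filter_upwards [eventually_ge_atTop 1] with n hn
      exact (hκ_eq n hn).symm.le.trans
        (tsum_learnability_le_add_effRank hlam_pos hlam_summable (hκ_pos n hn))
  have hv : Tendsto v atTop (𝓝 c) := by
    refine tendsto_of_tendsto_of_tendsto_of_le_of_le' (h.comp hk)
      ((tendsto_succ_div_sub_one hc h).comp ((tendsto_sub_atTop_nat 1).comp hk)) ?_ ?_
    · filter_upwards [eventually_ge_atTop 1] with n hn
      exact div_effRank_le_thresholdRatio hlam_pos hlam_summable (hκ_pos n hn)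
    · filter_upwards [eventually_ge_atTop 1, hk.eventually_ge_atTop 1] with n hn hkn
      refine (thresholdRatio_le_div_effRank_pred hlam_pos hlam_summable (hκ_pos n hn)
        hkn).trans_eq ?_
      simp [k, Nat.cast_sub hkn]
  have hE_bounds : ∀ᶠ n in atTop, 4 * (v n + 1) / (3 * v n + 4) ≤ E n ∧ E n ≤ 4 * (1 + v n) := by
    filter_upwards [eventually_ge_atTop 1] with n hn
    rw [hE n, ← hκ_eq n hn]
    exact learnability_overfitting_bounds hlam_pos hlam_mono hlam_summable (hκ_pos n hn)
  have hbdd : IsBoundedUnder (· ≤ ·) atTop E :=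
    ((hv.const_add 1).const_mul 4).isBoundedUnder_le.mono_le (hE_bounds.mono fun _ hn => hn.2)
  have hlow : Tendsto (fun n => 4 * (v n + 1) / (3 * v n + 4)) atTop
      (𝓝 (4 * (c + 1) / (3 * c + 4))) :=
    ((hv.add_const 1).const_mul 4).div ((hv.const_mul 3).add_const 4) (by positivity)
  refine ⟨?_, hbdd⟩
  calc 1 < 4 * (c + 1) / (3 * c + 4) := by rw [one_lt_div (by positivity)]; linarith
    _ = liminf (fun n => 4 * (v n + 1) / (3 * v n + 4)) atTop := hlow.liminf_eq.symm
    _ ≤ liminf E atTop := liminf_le_liminf (hE_bounds.mono fun _ hn => hn.1)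
      hlow.isBoundedUnder_ge hbdd.isCoboundedUnder_ge
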